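/- Let G be a graph and let φ and ψ be proper k-edge-colourings of G. Let F = {e ∈ E(G) : φ(e) ≠ ψ(e)}. If F is the edge set of a union of vertex-disjoint paths in G, then φ and ψ are Kempe equivalent. -/

import Mathlib

/-!
Induction on the total length of the paths. Let `W` be one of them, with first edge coloured `b`
by `φ` and `a` by `ψ`, and let `p` (resp. `q`) be the length of the longest initial segment of `W`
whose edges `φ` (resp. `ψ`) colours with `a` and `b`; by symmetry `p ≤ q`. Every `(a,b)`-edge of
`φ` at a vertex of the first `p` edges of `W` is one of them: an edge on which `φ` and `ψ` agree
would clash with an adjacent prefix edge, which `φ` and `ψ` colour `a`, `b` in opposite orders;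
an edge on which they differ lies on `W` by disjointness, and is not the next edge of `W` by
maximality of `p`. So the first `p` edges of `W` form an `(a,b)`-Kempe chain of `φ`; swapping it
makes `φ` agree with `ψ` there, and the colourings now differ on the paths with `W` shortened by
`p` edges.
-/

open SimpleGraph

/-- A proper `k`-edge-colouring of `G`: distinct edges sharing a vertex receive
different colours. -/
def IsProperEdgeColoring {V : Type*} (G : SimpleGraph V) (k : ℕ)
    (φ : G.edgeSet → Fin k) : Prop :=
  ∀ e₁ e₂ : G.edgeSet, e₁ ≠ e₂ →
    (∃ v : V, v ∈ (e₁ : Sym2 V) ∧ v ∈ (e₂ : Sym2 V)) → φ e₁ ≠ φ e₂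

/-- The spanning subgraph of `G` consisting of the edges coloured `a` or `b` under `φ`. -/
def kempeGraph {V : Type*} (G : SimpleGraph V) {k : ℕ} (φ : G.edgeSet → Fin k)
    (a b : Fin k) : SimpleGraph V where
  Adj u v := ∃ h : G.Adj u v, φ ⟨s(u, v), h⟩ = a ∨ φ ⟨s(u, v), h⟩ = b
  symm := by
    constructor
    rintro u v ⟨h, hc⟩
    refine ⟨h.symm, ?_⟩
    have he : (⟨s(v, u), h.symm⟩ : G.edgeSet) = ⟨s(u, v), h⟩ :=
      Subtype.ext (Sym2.eq_swap)
    rw [he]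
    exact hc
  loopless := by
    constructor
    rintro v ⟨h, _⟩
    exact G.loopless.irrefl v h

/-- The edge `e` lies in the Kempe chain determined by the colours `a, b` and the
connected component of the vertex `w` in the `(a,b)`-subgraph. -/
def InKempeChain {V : Type*} (G : SimpleGraph V) {k : ℕ} (φ : G.edgeSet → Fin k)
    (a b : Fin k) (w : V) (e : G.edgeSet) : Prop :=
  (φ e = a ∨ φ e = b) ∧ ∃ u ∈ (e : Sym2 V), (kempeGraph G φ a b).Reachable w u

/-- `ψ` is obtained from `φ` by a single Kempe change: the colours `a` and `b` are
swapped on one connected component of the subgraph induced by the edges coloured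
`a` or `b`, and all other edges keep their colour. -/
def KempeChange {V : Type*} (G : SimpleGraph V) (k : ℕ)
    (φ ψ : G.edgeSet → Fin k) : Prop :=
  ∃ (a b : Fin k) (w : V), ∀ e : G.edgeSet,
    (InKempeChain G φ a b w e → ψ e = Equiv.swap a b (φ e)) ∧
    (¬ InKempeChain G φ a b w e → ψ e = φ e)

/-- Kempe equivalence: `ψ` is obtained from `φ` by a finite sequence of Kempe changes. -/
def KempeEquiv {V : Type*} (G : SimpleGraph V) (k : ℕ)
    (φ ψ : G.edgeSet → Fin k) : Prop :=
  Relation.ReflTransGen (KempeChange G k) φ ψ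

section

variable {V : Type*} {G : SimpleGraph V} {k : ℕ}

section Swap

variable {α : Type*} [DecidableEq α] {a b x y : α}

lemma swap_apply_eq_or_eq_iff :
    (Equiv.swap a b x = a ∨ Equiv.swap a b x = b) ↔ (x = a ∨ x = b) := by
  rw [Equiv.swap_apply_eq_iff, Equiv.swap_apply_eq_iff, Equiv.swap_apply_left,
    Equiv.swap_apply_right, or_comm]

lemma swap_apply_eq_of_ne (hx : x = a ∨ x = b) (hy : y = a ∨ y = b) (hxy : x ≠ y) :
    Equiv.swap a b x = y := by
  rcases hx with rfl | rfl <;> rcases hy with rfl | rfl <;> simp_all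

end Swap

lemma List.Nodup.mem_drop_iff {α : Type*} {l : List α} (hl : l.Nodup) {x : α} {p : ℕ} :
    x ∈ l.drop p ↔ x ∈ l ∧ x ∉ l.take p := by
  refine ⟨fun h => ⟨List.mem_of_mem_drop h, fun h' => List.disjoint_take_drop hl le_rfl h' h⟩,
    fun ⟨h, h'⟩ => ?_⟩
  rw [← List.take_append_drop p l, List.mem_append] at h
  exact h.resolve_left h'

namespace SimpleGraph.Walk

variable {u v : V} {W : G.Walk u v}

lemma mem_take_edges_iff {e : Sym2 V} {p : ℕ} :
    e ∈ W.edges.take p ↔ ∃ m < min p W.length, s(W.getVert m, W.getVert (m + 1)) = e := by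
  rw [List.mem_take_iff_getElem]
  refine exists_congr fun m => ⟨fun ⟨hm, h⟩ => ?_, fun ⟨hm, h⟩ => ?_⟩
  · exact ⟨by simpa using hm, (getElem_edges _).symm.trans h⟩
  · exact ⟨by simpa using hm, (getElem_edges _).trans h⟩

lemma mem_edges_iff_getVert {e : Sym2 V} :
    e ∈ W.edges ↔ ∃ m < W.length, s(W.getVert m, W.getVert (m + 1)) = e := by
  rw [← List.take_length (l := W.edges), mem_take_edges_iff, length_edges, min_self]

lemma IsPath.getVert_mem_iff (hW : W.IsPath) {i m : ℕ} (hi : i ≤ W.length) (hm : m < W.length) :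
    W.getVert i ∈ s(W.getVert m, W.getVert (m + 1)) ↔ i = m ∨ i = m + 1 := by
  rw [Sym2.mem_iff]
  exact or_congr (hW.getVert_injOn.eq_iff hi hm.le) (hW.getVert_injOn.eq_iff hi hm)

lemma exists_edge_mem_take_edges {p j : ℕ} (hp : 0 < p) (hpl : p ≤ W.length) (hj : j ≤ p) :
    ∃ f : G.edgeSet, (f : Sym2 V) ∈ W.edges.take p ∧ W.getVert j ∈ (f : Sym2 V) := by
  obtain ⟨m, hm, hjm⟩ : ∃ m < p, j = m ∨ j = m + 1 := by
    rcases lt_or_eq_of_le hj with hj | rfl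
    exacts [⟨j, hj, Or.inl rfl⟩, ⟨j - 1, by omega, by omega⟩]
  have hml : m < W.length := hm.trans_le hpl
  refine ⟨⟨_, W.adj_getVert_succ hml⟩, mem_take_edges_iff.mpr ⟨m, by omega, rfl⟩, ?_⟩
  rcases hjm with rfl | rfl
  exacts [Sym2.mem_mk_left _ _, Sym2.mem_mk_right _ _]

end SimpleGraph.Walk

lemma SimpleGraph.Reachable.mem_of_adj_closed {H : SimpleGraph V} {S : Set V}
    (hS : ∀ x y, H.Adj x y → x ∈ S → y ∈ S) {x y : V} (h : H.Reachable x y) (hx : x ∈ S) :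
    y ∈ S := by
  rw [reachable_iff_reflTransGen] at h
  induction h with
  | refl => exact hx
  | tail _ hadj ih => exact hS _ _ hadj ih

section KempeChange

variable {φ ψ : G.edgeSet → Fin k} {a b : Fin k}

lemma mem_kempeGraph_edgeSet {e : G.edgeSet} :
    (e : Sym2 V) ∈ (kempeGraph G φ a b).edgeSet ↔ φ e = a ∨ φ e = b := by
  obtain ⟨e, he⟩ := e
  induction e using Sym2.ind
  exact ⟨fun ⟨_, h⟩ => h, fun h => ⟨he, h⟩⟩

lemma kempeGraph_reachable_of_mem {e : G.edgeSet} (hc : φ e = a ∨ φ e = b) {x y : V}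
    (hx : x ∈ (e : Sym2 V)) (hy : y ∈ (e : Sym2 V)) : (kempeGraph G φ a b).Reachable x y := by
  rcases eq_or_ne x y with rfl | hxy
  · rfl
  · have he : (e : Sym2 V) = s(x, y) := (Sym2.mem_and_mem_iff hxy).mp ⟨hx, hy⟩
    have hadj := mem_kempeGraph_edgeSet.mpr hc
    rw [he] at hadj
    exact hadj.reachable

lemma InKempeChain.reachable {w x : V} {e : G.edgeSet} (h : InKempeChain G φ a b w e)
    (hx : x ∈ (e : Sym2 V)) : (kempeGraph G φ a b).Reachable w x :=
  let ⟨hc, _, hu, hr⟩ := h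
  hr.trans (kempeGraph_reachable_of_mem hc hu hx)

lemma IsProperEdgeColoring.kempeChange (hφ : IsProperEdgeColoring G k φ)
    (h : KempeChange G k φ ψ) : IsProperEdgeColoring G k ψ := by
  obtain ⟨a, b, w, h⟩ := h
  have mixed : ∀ e f : G.edgeSet, InKempeChain G φ a b w e → ¬ InKempeChain G φ a b w f →
      ∀ v, v ∈ (e : Sym2 V) → v ∈ (f : Sym2 V) → ψ e ≠ ψ f := by
    intro e f he hf v hve hvf hψ
    rw [(h e).1 he, (h f).2 hf] at hψ
    exact hf ⟨hψ ▸ swap_apply_eq_or_eq_iff.mpr he.1, v, hvf, he.reachable hve⟩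
  intro e f hef ⟨v, hve, hvf⟩
  by_cases he : InKempeChain G φ a b w e <;> by_cases hf : InKempeChain G φ a b w f
  · rw [(h e).1 he, (h f).1 hf]
    exact (Equiv.swap a b).injective.ne (hφ e f hef ⟨v, hve, hvf⟩)
  · exact mixed e f he hf v hve hvf
  · exact (mixed f e hf he v hvf hve).symm
  · rw [(h e).2 he, (h f).2 hf]
    exact hφ e f hef ⟨v, hve, hvf⟩

lemma KempeChange.symm (h : KempeChange G k φ ψ) : KempeChange G k ψ φ := by
  obtain ⟨a, b, w, h⟩ := h
  have hcol : ∀ e, (ψ e = a ∨ ψ e = b) ↔ (φ e = a ∨ φ e = b) := by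
    intro e
    by_cases hc : InKempeChain G φ a b w e
    · rw [(h e).1 hc, swap_apply_eq_or_eq_iff]
    · rw [(h e).2 hc]
  have hgraph : kempeGraph G ψ a b = kempeGraph G φ a b := by
    ext u v
    exact exists_congr fun huv => hcol ⟨s(u, v), huv⟩
  have hchain : ∀ e, InKempeChain G ψ a b w e ↔ InKempeChain G φ a b w e := by
    intro e
    rw [InKempeChain, InKempeChain, hgraph, hcol e]
  refine ⟨a, b, w, fun e => ⟨fun hc => ?_, fun hc => ?_⟩⟩
  · rw [(h e).1 ((hchain e).mp hc), Equiv.swap_apply_self]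
  · exact ((h e).2 (mt (hchain e).mpr hc)).symm

open Classical in
noncomputable def kempeSwap (φ : G.edgeSet → Fin k) (a b : Fin k) (w : V) : G.edgeSet → Fin k :=
  fun e => if InKempeChain G φ a b w e then Equiv.swap a b (φ e) else φ e

lemma kempeChange_kempeSwap (w : V) : KempeChange G k φ (kempeSwap φ a b w) :=
  ⟨a, b, w, fun _ => ⟨fun h => if_pos h, fun h => if_neg h⟩⟩

lemma IsProperEdgeColoring.ne_of_adjacent_of_mem_pair (hφ : IsProperEdgeColoring G k φ)
    (hψ : IsProperEdgeColoring G k ψ) {e f : G.edgeSet} (hef : e ≠ f)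
    (hv : ∃ v, v ∈ (e : Sym2 V) ∧ v ∈ (f : Sym2 V)) (hf : φ f ≠ ψ f)
    (hfφ : φ f = a ∨ φ f = b) (hfψ : ψ f = a ∨ ψ f = b) (he : φ e = a ∨ φ e = b) :
    φ e ≠ ψ e := by
  have h1 := hφ e f hef hv
  have h2 := hψ e f hef hv
  grind

end KempeChange

section Paths

variable {n : ℕ}

structure PairwiseDisjointPaths (P : Fin n → Σ u : V, Σ v : V, G.Walk u v) : Prop where
  isPath : ∀ i, (P i).2.2.IsPath
  disjoint : ∀ i j, i ≠ j → ∀ x : V, x ∈ (P i).2.2.support → x ∉ (P j).2.2.support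

structure DiffOnDisjointPaths (φ ψ : G.edgeSet → Fin k)
    (P : Fin n → Σ u : V, Σ v : V, G.Walk u v) : Prop extends PairwiseDisjointPaths P where
  ne_iff : ∀ e : G.edgeSet, φ e ≠ ψ e ↔ ∃ i, (e : Sym2 V) ∈ (P i).2.2.edges

def dropPrefix (P : Fin n → Σ u : V, Σ v : V, G.Walk u v) (i : Fin n) (p : ℕ) :
    Fin n → Σ u : V, Σ v : V, G.Walk u v :=
  Function.update P i ⟨(P i).2.2.getVert p, (P i).2.1, (P i).2.2.drop p⟩

variable {P : Fin n → Σ u : V, Σ v : V, G.Walk u v} {i j : Fin n} {p : ℕ}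

lemma dropPrefix_self :
    dropPrefix P i p i = ⟨(P i).2.2.getVert p, (P i).2.1, (P i).2.2.drop p⟩ :=
  Function.update_self ..

lemma dropPrefix_of_ne (h : j ≠ i) : dropPrefix P i p j = P j :=
  Function.update_of_ne h ..

lemma support_dropPrefix_subset (j : Fin n) :
    (dropPrefix P i p j).2.2.support ⊆ (P j).2.2.support := by
  rcases eq_or_ne j i with rfl | h
  · rw [dropPrefix_self]
    exact ((P j).2.2.isSubwalk_drop p).support_subset
  · rw [dropPrefix_of_ne h]
    exact List.Subset.refl _

lemma sum_length_dropPrefix_lt (hp : 0 < p) (hpl : p ≤ (P i).2.2.length) :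
    ∑ j, (dropPrefix P i p j).2.2.length < ∑ j, (P j).2.2.length := by
  refine Finset.sum_lt_sum (fun j _ => ?_) ⟨i, Finset.mem_univ _, ?_⟩
  · rcases eq_or_ne j i with rfl | h
    · rw [dropPrefix_self]
      exact ((P j).2.2.drop_length p).trans_le (Nat.sub_le _ _)
    · rw [dropPrefix_of_ne h]
  · rw [dropPrefix_self]
    exact ((P i).2.2.drop_length p).trans_lt (by omega)

namespace PairwiseDisjointPaths

lemma eq_of_mem_support (hP : PairwiseDisjointPaths P) {x : V} (hi : x ∈ (P i).2.2.support)
    (hj : x ∈ (P j).2.2.support) : i = j := by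
  by_contra h
  exact hP.disjoint i j h x hi hj

lemma dropPrefix (hP : PairwiseDisjointPaths P) : PairwiseDisjointPaths (dropPrefix P i p) where
  isPath j := by
    rcases eq_or_ne j i with rfl | h
    · rw [dropPrefix_self]
      exact (hP.isPath j).drop p
    · rw [dropPrefix_of_ne h]
      exact hP.isPath j
  disjoint j j' h x hx hx' :=
    hP.disjoint j j' h x (support_dropPrefix_subset j hx) (support_dropPrefix_subset j' hx')

end PairwiseDisjointPaths

namespace DiffOnDisjointPaths

variable {φ ψ : G.edgeSet → Fin k}

lemma symm (hD : DiffOnDisjointPaths φ ψ P) : DiffOnDisjointPaths ψ φ P where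
  toPairwiseDisjointPaths := hD.toPairwiseDisjointPaths
  ne_iff e := ne_comm.trans (hD.ne_iff e)

lemma mem_edges_of_ne (hD : DiffOnDisjointPaths φ ψ P) {e : G.edgeSet} (hne : φ e ≠ ψ e)
    {x : V} (hx : x ∈ (e : Sym2 V)) (hxi : x ∈ (P i).2.2.support) :
    (e : Sym2 V) ∈ (P i).2.2.edges := by
  obtain ⟨j, hj⟩ := (hD.ne_iff e).mp hne
  rwa [hD.eq_of_mem_support hxi (Walk.mem_support_of_mem_edges hj hx)]

end DiffOnDisjointPaths

end Paths

section Prefix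

variable {φ ψ : G.edgeSet → Fin k} {a b : Fin k} {u v : V} {W : G.Walk u v} {p : ℕ}

def PrefixInKempeGraph (φ : G.edgeSet → Fin k) (a b : Fin k) (W : G.Walk u v) (p : ℕ) : Prop :=
  ∀ j < p, (kempeGraph G φ a b).Adj (W.getVert j) (W.getVert (j + 1))

namespace PrefixInKempeGraph

lemma mono {q : ℕ} (h : PrefixInKempeGraph φ a b W q) (hpq : p ≤ q) :
    PrefixInKempeGraph φ a b W p :=
  fun j hj => h j (hj.trans_le hpq)

lemma reachable (h : PrefixInKempeGraph φ a b W p) :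
    ∀ j ≤ p, (kempeGraph G φ a b).Reachable u (W.getVert j)
  | 0, _ => by rw [Walk.getVert_zero]
  | j + 1, hj => (h.reachable j (by omega)).trans (h j (by omega)).reachable

lemma mem_pair_of_mem_take (h : PrefixInKempeGraph φ a b W p) {e : G.edgeSet}
    (he : (e : Sym2 V) ∈ W.edges.take p) : φ e = a ∨ φ e = b := by
  obtain ⟨j, hj, hje⟩ := Walk.mem_take_edges_iff.mp he
  have hadj := h j (lt_of_lt_of_le hj (min_le_left _ _))
  rwa [← mem_edgeSet, hje, mem_kempeGraph_edgeSet] at hadj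

lemma exists_maximal (h1 : PrefixInKempeGraph φ a b W 1) (hlen : 0 < W.length) :
    ∃ p, 0 < p ∧ p ≤ W.length ∧ PrefixInKempeGraph φ a b W p ∧
      (p < W.length → ¬ (kempeGraph G φ a b).Adj (W.getVert p) (W.getVert (p + 1))) := by
  classical
  set p := Nat.findGreatest (PrefixInKempeGraph φ a b W) W.length
  have hp := Nat.findGreatest_spec hlen h1
  refine ⟨p, Nat.le_findGreatest hlen h1, Nat.findGreatest_le _, hp, fun hpl hadj => ?_⟩
  refine Nat.findGreatest_is_greatest (Nat.lt_succ_self p) hpl fun j hj => ?_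
  rcases Nat.lt_succ_iff_lt_or_eq.mp hj with hj | rfl
  exacts [hp j hj, hadj]

end PrefixInKempeGraph

structure IsKempePrefix (φ ψ : G.edgeSet → Fin k) (a b : Fin k) (W : G.Walk u v) (p : ℕ) :
    Prop where
  pos : 0 < p
  le_length : p ≤ W.length
  left : PrefixInKempeGraph φ a b W p
  right : PrefixInKempeGraph ψ a b W p
  maximal : p < W.length → ¬ (kempeGraph G φ a b).Adj (W.getVert p) (W.getVert (p + 1))

lemma exists_isKempePrefix (φ ψ : G.edgeSet → Fin k) (hlen : 0 < W.length) :
    ∃ a b p, IsKempePrefix φ ψ a b W p ∨ IsKempePrefix ψ φ a b W p := by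
  set e₀ : G.edgeSet := ⟨s(W.getVert 0, W.getVert 1), W.adj_getVert_succ hlen⟩
  have first_edge (χ : G.edgeSet → Fin k) (hχ : χ e₀ = ψ e₀ ∨ χ e₀ = φ e₀) :
      PrefixInKempeGraph χ (ψ e₀) (φ e₀) W 1 := by
    intro j hj
    obtain rfl : j = 0 := by omega
    exact ⟨W.adj_getVert_succ hlen, hχ⟩
  obtain ⟨p, hp, hpl, hφp, hpmax⟩ := (first_edge φ (.inr rfl)).exists_maximal hlen
  obtain ⟨q, hq, hql, hψq, hqmax⟩ := (first_edge ψ (.inl rfl)).exists_maximal hlen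
  refine ⟨ψ e₀, φ e₀, ?_⟩
  rcases le_total p q with hpq | hqp
  · exact ⟨p, .inl ⟨hp, hpl, hφp, hψq.mono hpq, hpmax⟩⟩
  · exact ⟨q, .inr ⟨hq, hql, hψq, hφp.mono hqp, hqmax⟩⟩

end Prefix

namespace DiffOnDisjointPaths

variable {n : ℕ} {P : Fin n → Σ u : V, Σ v : V, G.Walk u v} {i : Fin n} {p : ℕ}
  {φ ψ : G.edgeSet → Fin k} {a b : Fin k}

lemma mem_take_edges_of_mem_pair (hD : DiffOnDisjointPaths φ ψ P)
    (hφ : IsProperEdgeColoring G k φ) (hψ : IsProperEdgeColoring G k ψ)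
    (hK : IsKempePrefix φ ψ a b (P i).2.2 p) {e : G.edgeSet} (hc : φ e = a ∨ φ e = b) {j : ℕ}
    (hj : j ≤ p) (hje : (P i).2.2.getVert j ∈ (e : Sym2 V)) :
    (e : Sym2 V) ∈ (P i).2.2.edges.take p := by
  set W := (P i).2.2
  by_cases hne : φ e = ψ e
  · exfalso
    obtain ⟨f, hf, hjf⟩ := Walk.exists_edge_mem_take_edges hK.pos hK.le_length hj
    have hfne : φ f ≠ ψ f := (hD.ne_iff f).mpr ⟨i, List.mem_of_mem_take hf⟩
    have hef : e ≠ f := by rintro rfl; exact hfne hne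
    exact hφ.ne_of_adjacent_of_mem_pair hψ hef ⟨_, hje, hjf⟩ hfne
      (hK.left.mem_pair_of_mem_take hf) (hK.right.mem_pair_of_mem_take hf) hc hne
  · obtain ⟨m, hm, hme⟩ := Walk.mem_edges_iff_getVert.mp
      (hD.mem_edges_of_ne hne hje (W.getVert_mem_support j))
    rw [← hme, (hD.isPath i).getVert_mem_iff (hj.trans hK.le_length) hm] at hje
    by_cases hmp : m < p
    · exact Walk.mem_take_edges_iff.mpr ⟨m, lt_min hmp hm, hme⟩
    · have hmp : m = p := by omega
      subst hmp
      refine absurd ?_ (hK.maximal hm)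
      rw [← mem_edgeSet, hme]
      exact mem_kempeGraph_edgeSet.mpr hc

lemma inKempeChain_iff (hD : DiffOnDisjointPaths φ ψ P)
    (hφ : IsProperEdgeColoring G k φ) (hψ : IsProperEdgeColoring G k ψ)
    (hK : IsKempePrefix φ ψ a b (P i).2.2 p) {e : G.edgeSet} :
    InKempeChain G φ a b (P i).1 e ↔ (e : Sym2 V) ∈ (P i).2.2.edges.take p := by
  set W := (P i).2.2
  have hclosed : ∀ x y, (kempeGraph G φ a b).Adj x y →
      x ∈ {y | ∃ j ≤ p, y = W.getVert j} → y ∈ {y | ∃ j ≤ p, y = W.getVert j} := by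
    rintro x y ⟨hxy, hc⟩ ⟨j, hj, rfl⟩
    obtain ⟨m, hm, hme⟩ := Walk.mem_take_edges_iff.mp
      (hD.mem_take_edges_of_mem_pair hφ hψ hK (e := ⟨_, hxy⟩) hc hj (Sym2.mem_mk_left _ _))
    rcases Sym2.eq_iff.mp hme with ⟨-, hy⟩ | ⟨hy, -⟩
    exacts [⟨m + 1, by omega, hy.symm⟩, ⟨m, by omega, hy.symm⟩]
  constructor
  · rintro ⟨hc, x, hx, hreach⟩
    obtain ⟨j, hj, rfl⟩ := hreach.mem_of_adj_closed hclosed ⟨0, Nat.zero_le _, W.getVert_zero.symm⟩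
    exact hD.mem_take_edges_of_mem_pair hφ hψ hK hc hj hx
  · intro he
    obtain ⟨m, hm, hme⟩ := Walk.mem_take_edges_iff.mp he
    refine ⟨hK.left.mem_pair_of_mem_take he, W.getVert m, hme ▸ Sym2.mem_mk_left _ _, ?_⟩
    exact hK.left.reachable m (by omega)

lemma kempeSwap_dropPrefix (hD : DiffOnDisjointPaths φ ψ P)
    (hφ : IsProperEdgeColoring G k φ) (hψ : IsProperEdgeColoring G k ψ)
    (hK : IsKempePrefix φ ψ a b (P i).2.2 p) :
    DiffOnDisjointPaths (kempeSwap φ a b (P i).1) ψ (dropPrefix P i p) where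
  toPairwiseDisjointPaths := hD.toPairwiseDisjointPaths.dropPrefix
  ne_iff e := by
    set W := (P i).2.2
    have hnodup := (hD.isPath i).edges_nodup
    by_cases hc : InKempeChain G φ a b (P i).1 e
    · have he := (hD.inKempeChain_iff hφ hψ hK).mp hc
      have hW : (e : Sym2 V) ∈ W.edges := List.mem_of_mem_take he
      rw [kempeSwap, if_pos hc, swap_apply_eq_of_ne hc.1 (hK.right.mem_pair_of_mem_take he)
        ((hD.ne_iff e).mpr ⟨i, hW⟩)]
      refine iff_of_false (not_not.mpr rfl) fun ⟨j, hj⟩ => ?_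
      rcases eq_or_ne j i with rfl | hji
      · rw [dropPrefix_self] at hj
        exact ((hnodup.mem_drop_iff.mp (W.edges_drop p ▸ hj)).2 he)
      · rw [dropPrefix_of_ne hji] at hj
        exact hji (hD.eq_of_mem_support (Walk.mem_support_of_mem_edges hj (Sym2.out_fst_mem _))
          (Walk.mem_support_of_mem_edges hW (Sym2.out_fst_mem _)))
    · have he : (e : Sym2 V) ∉ W.edges.take p := mt (hD.inKempeChain_iff hφ hψ hK).mpr hc
      rw [kempeSwap, if_neg hc, hD.ne_iff e]
      refine exists_congr fun j => ?_
      rcases eq_or_ne j i with rfl | hji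
      · rw [dropPrefix_self]
        dsimp only
        rw [Walk.edges_drop]
        exact (hnodup.mem_drop_iff.trans (and_iff_left he)).symm
      · rw [dropPrefix_of_ne hji]

lemma kempeEquiv (hD : DiffOnDisjointPaths φ ψ P) (hφ : IsProperEdgeColoring G k φ)
    (hψ : IsProperEdgeColoring G k ψ) : KempeEquiv G k φ ψ := by
  induction hN : ∑ j, (P j).2.2.length using Nat.strong_induction_on generalizing φ ψ P with
  | _ N ih =>
    by_cases hφψ : φ = ψ
    · subst hφψ
      exact .refl
    obtain ⟨e, he⟩ := Function.ne_iff.mp hφψ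
    obtain ⟨i, hi⟩ := (hD.ne_iff e).mp he
    have hlen : 0 < (P i).2.2.length := (P i).2.2.length_edges ▸ List.length_pos_of_mem hi
    obtain ⟨a, b, p, hK | hK⟩ := exists_isKempePrefix φ ψ hlen <;>
      have hlt := hN ▸ sum_length_dropPrefix_lt hK.pos hK.le_length
    · have hchange := kempeChange_kempeSwap (φ := φ) (a := a) (b := b) (P i).1
      exact .head hchange
        (ih _ hlt (hD.kempeSwap_dropPrefix hφ hψ hK) (hφ.kempeChange hchange) hψ rfl)
    · have hchange := kempeChange_kempeSwap (φ := ψ) (a := a) (b := b) (P i).1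
      exact .tail
        (ih _ hlt (hD.symm.kempeSwap_dropPrefix hψ hφ hK).symm hφ (hψ.kempeChange hchange) rfl)
        hchange.symm

end DiffOnDisjointPaths

end

theorem kempe_equiv_of_diff_on_disjoint_paths_general {V : Type*}
    (G : SimpleGraph V) (k : ℕ) (φ ψ : G.edgeSet → Fin k)
    (hφ : IsProperEdgeColoring G k φ) (hψ : IsProperEdgeColoring G k ψ)
    (n : ℕ) (P : Fin n → Σ u : V, Σ v : V, G.Walk u v)
    (hpath : ∀ i, (P i).2.2.IsPath)
    (hdisj : ∀ i j, i ≠ j →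
      ∀ x : V, x ∈ (P i).2.2.support → x ∉ (P j).2.2.support)
    (hF : ∀ e : G.edgeSet, φ e ≠ ψ e ↔ ∃ i, (e : Sym2 V) ∈ (P i).2.2.edges) :
    KempeEquiv G k φ ψ :=
  DiffOnDisjointPaths.kempeEquiv ⟨⟨hpath, hdisj⟩, hF⟩ hφ hψ

/-- **Lemma (path lemma).** Let `φ` and `ψ` be proper `k`-edge-colourings of `G`, and let
`F = {e ∈ E(G) : φ(e) ≠ ψ(e)}`. If `F` is the edge set of a union of vertex-disjoint
paths in `G`, then `φ` and `ψ` are Kempe equivalent. -/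
theorem kempe_equiv_of_diff_on_disjoint_paths {V : Type*} [Fintype V]
    (G : SimpleGraph V) (k : ℕ) (φ ψ : G.edgeSet → Fin k)
    (hφ : IsProperEdgeColoring G k φ) (hψ : IsProperEdgeColoring G k ψ)
    (n : ℕ) (P : Fin n → Σ u : V, Σ v : V, G.Walk u v)
    (hpath : ∀ i, (P i).2.2.IsPath)
    (hdisj : ∀ i j, i ≠ j →
      ∀ x : V, x ∈ (P i).2.2.support → x ∉ (P j).2.2.support)
    (hF : ∀ e : G.edgeSet, φ e ≠ ψ e ↔ ∃ i, (e : Sym2 V) ∈ (P i).2.2.edges) :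
    KempeEquiv G k φ ψ :=
  kempe_equiv_of_diff_on_disjoint_paths_general G k φ ψ hφ hψ n P hpath hdisj hF
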